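/- Let (T*Q, Ω_θ, θ) be the l.c.s. cotangent bundle associated to a closed 1-form ϑ on Q. A 1-form γ on Q has image a Lagrangian submanifold of (T*Q, Ω_θ) if and only if d_ϑ γ = dγ − ϑ ∧ γ = 0. -/

import Mathlib

/- Differential forms on a normed space (a chart model):
   a 1-form is a map `E → (E →L[ℝ] ℝ)`, a 2-form a map `E → (E →L[ℝ] E →L[ℝ] ℝ)`.
   The exterior derivative is defined through `fderiv`. -/

variable {E : Type*} [NormedAddCommGroup E] [NormedSpace ℝ E]

/-- Exterior derivative of a 1-form. -/
noncomputable def extD1 (α : E → (E →L[ℝ] ℝ)) (x : E) : E →L[ℝ] E →L[ℝ] ℝ :=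
  fderiv ℝ α x - (fderiv ℝ α x).flip

/-- Exterior derivative of a 2-form, evaluated on three vectors. -/
noncomputable def extD2 (ω : E → (E →L[ℝ] E →L[ℝ] ℝ)) (x u v w : E) : ℝ :=
  fderiv ℝ ω x u v w - fderiv ℝ ω x v u w + fderiv ℝ ω x w u v

/-- Wedge product of two covectors. -/
noncomputable def wedge11 (α β : E →L[ℝ] ℝ) : E →L[ℝ] E →L[ℝ] ℝ :=
  α.smulRight β - β.smulRight α

variable {F : Type*} [NormedAddCommGroup F] [NormedSpace ℝ F]

/-- The canonical Liouville one-form `Θ_Q` on `T*Q = F × F*`. -/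
noncomputable def liouOne : F × (F →L[ℝ] ℝ) → ((F × (F →L[ℝ] ℝ)) →L[ℝ] ℝ) :=
  fun z => z.2.comp (ContinuousLinearMap.fst ℝ F (F →L[ℝ] ℝ))

/-- The pullback `θ = π_Q^* ϑ` of a one-form `ϑ` on `Q` to `T*Q`. -/
noncomputable def thetaP (ϑ : F → (F →L[ℝ] ℝ)) :
    F × (F →L[ℝ] ℝ) → ((F × (F →L[ℝ] ℝ)) →L[ℝ] ℝ) :=
  fun z => (ϑ z.1).comp (ContinuousLinearMap.fst ℝ F (F →L[ℝ] ℝ))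

/-- The l.c.s. two-form `Ω_θ = -dΘ_Q + θ ∧ Θ_Q` on `T*Q`. -/
noncomputable def OmegaTheta (ϑ : F → (F →L[ℝ] ℝ)) (z : F × (F →L[ℝ] ℝ)) :
    (F × (F →L[ℝ] ℝ)) →L[ℝ] (F × (F →L[ℝ] ℝ)) →L[ℝ] ℝ :=
  -(extD1 liouOne z) + wedge11 (thetaP ϑ z) (liouOne z)

/-- `liouOne` as a continuous linear map. -/
noncomputable def liouCLM : (F × (F →L[ℝ] ℝ)) →L[ℝ] ((F × (F →L[ℝ] ℝ)) →L[ℝ] ℝ) :=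
  ((ContinuousLinearMap.compL ℝ (F × (F →L[ℝ] ℝ)) F ℝ).flip
      (ContinuousLinearMap.fst ℝ F (F →L[ℝ] ℝ))).comp
    (ContinuousLinearMap.snd ℝ F (F →L[ℝ] ℝ))

lemma liouOne_eq : (liouOne : F × (F →L[ℝ] ℝ) → _) = ⇑liouCLM := by
  funext z
  rfl

lemma fderiv_liouOne (z : F × (F →L[ℝ] ℝ)) :
    fderiv ℝ (liouOne : F × (F →L[ℝ] ℝ) → _) z = liouCLM := by
  rw [liouOne_eq, ContinuousLinearMap.fderiv]

lemma OmegaTheta_apply (ϑ : F → (F →L[ℝ] ℝ)) (z U V : F × (F →L[ℝ] ℝ)) :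
    OmegaTheta ϑ z U V =
      V.2 U.1 - U.2 V.1 + (ϑ z.1 U.1 * z.2 V.1 - ϑ z.1 V.1 * z.2 U.1) := by
  simp [OmegaTheta, extD1, wedge11, fderiv_liouOne, liouCLM, thetaP, liouOne,
    ContinuousLinearMap.sub_apply, ContinuousLinearMap.add_apply,
    ContinuousLinearMap.neg_apply, ContinuousLinearMap.flip_apply,
    ContinuousLinearMap.smulRight_apply, smul_eq_mul]
  change -(U.2 V.1 - V.2 U.1) + (ϑ z.1 U.1 * z.2 V.1 - z.2 U.1 * ϑ z.1 V.1) = _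
  ring

/-- the image of a one-form `γ` on `Q` (a section `q ↦ (q, γ q)` of
`T*Q`) is a Lagrangian submanifold of `(T*Q, Ω_θ)` — i.e. at each point of the image,
the `Ω_θ`-orthogonal complement of the tangent space of the image equals that
tangent space — if and only if `d_ϑ γ = dγ - ϑ ∧ γ = 0`. -/
theorem section_lagrangian_iff_ldr_closed
    (ϑ : F → (F →L[ℝ] ℝ)) (hϑ : ContDiff ℝ (⊤ : ℕ∞) ϑ)
    -- ϑ is closed
    (hclosed : ∀ q u v, extD1 ϑ q u v = 0)
    (γ : F → (F →L[ℝ] ℝ)) (hγ : ContDiff ℝ (⊤ : ℕ∞) γ) :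
    (∀ q : F,
      {U : F × (F →L[ℝ] ℝ) |
          ∀ V ∈ Set.range (fun u : F => ((u, fderiv ℝ γ q u) : F × (F →L[ℝ] ℝ))),
            OmegaTheta ϑ (q, γ q) U V = 0} =
        Set.range (fun u : F => ((u, fderiv ℝ γ q u) : F × (F →L[ℝ] ℝ)))) ↔
    (∀ q u v, extD1 γ q u v - (ϑ q u * γ q v - ϑ q v * γ q u) = 0) := by
  have hext : ∀ q u v, extD1 γ q u v = fderiv ℝ γ q u v - fderiv ℝ γ q v u := by
    intro q u v
    simp [extD1, ContinuousLinearMap.sub_apply, ContinuousLinearMap.flip_apply]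
  constructor
  · intro h q u v
    have hu : ((u, fderiv ℝ γ q u) : F × (F →L[ℝ] ℝ)) ∈
        {U : F × (F →L[ℝ] ℝ) |
          ∀ V ∈ Set.range (fun u : F => ((u, fderiv ℝ γ q u) : F × (F →L[ℝ] ℝ))),
            OmegaTheta ϑ (q, γ q) U V = 0} := by
      rw [h q]; exact ⟨u, rfl⟩
    have := hu ((v, fderiv ℝ γ q v)) ⟨v, rfl⟩
    rw [OmegaTheta_apply] at this
    simp only at this
    rw [hext]
    linarith
  · intro h q
    ext U
    simp only [Set.mem_setOf_eq]
    constructor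
    · rintro hU
      refine ⟨U.1, ?_⟩
      have hU2 : fderiv ℝ γ q U.1 = U.2 := by
        ext v
        have h1 := hU ((v, fderiv ℝ γ q v)) ⟨v, rfl⟩
        rw [OmegaTheta_apply] at h1
        simp only at h1
        have h2 := h q U.1 v
        rw [hext] at h2
        linarith
      simp [hU2]
    · rintro ⟨u, rfl⟩ V ⟨v, rfl⟩
      rw [OmegaTheta_apply]
      simp only
      have h2 := h q u v
      rw [hext] at h2
      linarith
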